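/- arXiv:2311.17255 — 3 statements merged into one kernel-verified Lean document; each statement's English description precedes it below -/
import Mathlib

section
/- Let A and B be abelian groups. Define Ψ : C³(A,B) → C³(A,B) by Ψ(ω)(x₁,x₂,x₃) = Σ_{σ ∈ S₃} sgn(σ)·ω(x_{σ(1)}, x_{σ(2)}, x_{σ(3)}). Then: (i) Ψ is a group homomorphism; (ii) if ω ∈ Z³(A,B) is a 3-cocycle, then Ψ(ω) is ℤ-trilinear in each variable and alternating (it vanishes whenever two arguments are equal); (iii) Ψ(τ) = 0 for every 3-coboundary τ ∈ B³(A,B). Consequently Ψ induces a group homomorphism from H³(A,B) to the group of alternating trilinear maps A × A × A → B. -/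
/-!
Expanding the sum over `S₃`, `Ψ(ω)` is a signed sum of six values of `ω`. Since `A` is abelian,
the defect `Ψ(ω)(x x', y, z) - Ψ(ω)(x, y, z) - Ψ(ω)(x', y, z)` is a signed sum of twelve values of
`dω`, so for a cocycle `Ψ(ω)` is additive in the first variable; antisymmetry of `Ψ(ω)` moves
this to the other two. For a coboundary `dκ`, the six values of `dκ` cancel in pairs after
commuting the products.
-/

namespace Zesting

variable {A B : Type*} [CommGroup A] [AddCommGroup B]

/-- `Ψ(ω)(x₁,x₂,x₃) = Σ_{σ ∈ S₃} sgn(σ)·ω(x_{σ(1)}, x_{σ(2)}, x_{σ(3)})`. -/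
def Psi (ω : A → A → A → B) : A → A → A → B := fun x₁ x₂ x₃ =>
  ∑ σ : Equiv.Perm (Fin 3),
    ((Equiv.Perm.sign σ : ℤˣ) : ℤ) •
      ω (![x₁, x₂, x₃] (σ 0)) (![x₁, x₂, x₃] (σ 1)) (![x₁, x₂, x₃] (σ 2))

/-- `ω ∈ Z³(A,B)` (trivial action, inhomogeneous cochains). -/
def IsCocycle3 (ω : A → A → A → B) : Prop :=
  ∀ x y z w, ω y z w - ω (x * y) z w + ω x (y * z) w - ω x y (z * w) + ω x y z = 0

/-- `τ ∈ B³(A,B)` (trivial action, inhomogeneous cochains). -/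
def IsCoboundary3 (τ : A → A → A → B) : Prop :=
  ∃ κ : A → A → B, ∀ x y z, τ x y z = κ y z - κ (x * y) z + κ x (y * z) - κ x y

section Antisymmetrization

variable {X : Type*} (ω ω' : X → X → X → B) (x y z : X)

open Equiv in
theorem Psi_apply :
    Psi ω x y z = ω x y z - ω y x z - ω x z y - ω z y x + ω y z x + ω z x y := by
  have univ_eq : (Finset.univ : Finset (Perm (Fin 3))) =
      {1, swap 0 1, swap 1 2, swap 0 2, swap 0 1 * swap 1 2, swap 1 2 * swap 0 1} := by
    decide
  rw [Psi, univ_eq]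
  simp +decide only [Finset.sum_insert, Finset.mem_insert, Finset.mem_singleton,
    Finset.sum_singleton, Perm.sign_one, Perm.sign_swap', Perm.sign_mul, Units.val_one,
    Units.val_neg, Perm.coe_one, Perm.coe_mul, Function.comp_apply, id_eq, swap_apply_left,
    swap_apply_right, swap_apply_def, Matrix.cons_val_zero, Matrix.cons_val_one, Matrix.cons_val,
    one_smul, neg_smul, mul_neg, mul_one, neg_neg, not_false_eq_true, reduceIte, Fin.isValue]
  abel

theorem Psi_add : Psi (ω + ω') = Psi ω + Psi ω' := by
  funext x y z
  simp only [Psi_apply, Pi.add_apply]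
  abel

theorem Psi_sub : Psi (ω - ω') = Psi ω - Psi ω' := by
  funext x y z
  simp only [Psi_apply, Pi.sub_apply]
  abel

theorem Psi_swap₁₂ : Psi ω y x z = -Psi ω x y z := by
  rw [Psi_apply, Psi_apply]
  abel

theorem Psi_swap₁₃ : Psi ω z y x = -Psi ω x y z := by
  rw [Psi_apply, Psi_apply]
  abel

theorem Psi_diag₁₂ : Psi ω x x y = 0 := by
  rw [Psi_apply]
  abel

theorem Psi_diag₂₃ : Psi ω x y y = 0 := by
  rw [Psi_apply]
  abel

theorem Psi_diag₁₃ : Psi ω x y x = 0 := by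
  rw [Psi_apply]
  abel

end Antisymmetrization

def d3 (ω : A → A → A → B) (x y z w : A) : B :=
  ω y z w - ω (x * y) z w + ω x (y * z) w - ω x y (z * w) + ω x y z

theorem isCocycle3_iff_d3_eq_zero {ω : A → A → A → B} :
    IsCocycle3 ω ↔ ∀ x y z w, d3 ω x y z w = 0 :=
  Iff.rfl

theorem Psi_mul_left_sub (ω : A → A → A → B) (x x' y z : A) :
    Psi ω (x * x') y z - (Psi ω x y z + Psi ω x' y z) =
      -d3 ω x x' y z + d3 ω x x' z y + d3 ω x y x' z - d3 ω x y z x'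
        - d3 ω x z x' y + d3 ω x z y x' - d3 ω y x x' z + d3 ω y x z x'
        - d3 ω y z x x' + d3 ω z x x' y - d3 ω z x y x' + d3 ω z y x x' := by
  simp only [Psi_apply, d3, mul_comm]
  abel

variable {ω : A → A → A → B}

theorem Psi_mul_left (hω : IsCocycle3 ω) (x x' y z : A) :
    Psi ω (x * x') y z = Psi ω x y z + Psi ω x' y z := by
  rw [← sub_eq_zero, Psi_mul_left_sub]
  simp only [isCocycle3_iff_d3_eq_zero.mp hω]
  abel

theorem Psi_mul_mid (hω : IsCocycle3 ω) (x y y' z : A) :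
    Psi ω x (y * y') z = Psi ω x y z + Psi ω x y' z := by
  rw [Psi_swap₁₂ ω (y * y'), Psi_mul_left hω, neg_add, ← Psi_swap₁₂, ← Psi_swap₁₂]

theorem Psi_mul_right (hω : IsCocycle3 ω) (x y z z' : A) :
    Psi ω x y (z * z') = Psi ω x y z + Psi ω x y z' := by
  rw [Psi_swap₁₃ ω (z * z'), Psi_mul_left hω, neg_add, ← Psi_swap₁₃, ← Psi_swap₁₃]

theorem Psi_eq_zero_of_isCoboundary3 (hω : IsCoboundary3 ω) : Psi ω = 0 := by
  obtain ⟨κ, hκ⟩ := hω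
  funext x y z
  simp only [Psi_apply, hκ, mul_comm, Pi.zero_apply]
  abel

theorem Psi_eq_of_isCoboundary3_sub {ω' : A → A → A → B} (h : IsCoboundary3 (ω - ω')) :
    Psi ω = Psi ω' := by
  rw [← sub_eq_zero, ← Psi_sub, Psi_eq_zero_of_isCoboundary3 h]

/-- (i) `Ψ` is a group homomorphism; (ii) on 3-cocycles `Ψ(ω)`
is trilinear and alternating; (iii) `Ψ` vanishes on 3-coboundaries.
Consequently `Ψ` descends to cohomology. -/
theorem statement8 :
    (∀ ω ω' : A → A → A → B, Psi (ω + ω') = Psi ω + Psi ω') ∧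
    (∀ ω : A → A → A → B, IsCocycle3 ω →
      ((∀ x x' y z, Psi ω (x * x') y z = Psi ω x y z + Psi ω x' y z) ∧
       (∀ x y y' z, Psi ω x (y * y') z = Psi ω x y z + Psi ω x y' z) ∧
       (∀ x y z z', Psi ω x y (z * z') = Psi ω x y z + Psi ω x y z') ∧
       (∀ x y, Psi ω x x y = 0) ∧
       (∀ x y, Psi ω x y y = 0) ∧
       (∀ x y, Psi ω x y x = 0))) ∧
    (∀ τ : A → A → A → B, IsCoboundary3 τ → Psi τ = 0) ∧
    (∀ ω ω' : A → A → A → B, IsCocycle3 ω → IsCocycle3 ω' →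
      IsCoboundary3 (ω - ω') → Psi ω = Psi ω') :=
  ⟨Psi_add, fun ω hω => ⟨Psi_mul_left hω, Psi_mul_mid hω, Psi_mul_right hω, Psi_diag₁₂ ω,
    Psi_diag₂₃ ω, Psi_diag₁₃ ω⟩, fun _ => Psi_eq_zero_of_isCoboundary3,
    fun _ _ _ _ => Psi_eq_of_isCoboundary3_sub⟩

end Zesting
end

section
/- Let K = ℤ/2 × ℤ/2, identify K̂ with K via the pairing ⟨x,y⟩ = (−1)^{x₁y₁ + x₂y₂}, and use the symmetric bicharacter c(x,y) = (−1)^{x₁y₁ + x₂y₂}. Let ζ₈ = e^{iπ/4}. For any integers m, n and c' ∈ {0,1}, define λ(x,y) = (m x₁y₁ mod 2, n x₂y₂ mod 2) ∈ K, ω(x,y,z) = ζ₈^{2(m x₁y₁z₁ + n x₂y₂z₂)}, and t(x,y) = ζ₈^{m x₁y₁ + n x₂y₂}·(−1)^{c' x₁y₂}, with coordinates represented in {0,1}. Then (λ, ω, t) is a braided zesting datum: λ is a symmetric 2-cocycle in Z²(K,K), d³(ω) = λ ∧_c λ, and the equations (BZ2) and (BZ3) hold. -/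
/-!
All the data take values in the cyclic group generated by `ζ₈`, where `−1 = ζ₈⁴`, so each
identity is a congruence mod 8 between integer exponents. Expanding the coordinates of a sum in
`ZMod 2` by `(a + b).val = a.val + b.val − 2 a.val b.val` turns these exponents into integer
polynomials in the coordinates. The pairing with `λ` only sees `λ` mod 2, where `m² ≡ m`; after
that, the exponents of the two sides agree up to the contribution of the bicharacter
`(−1)^{c' x₁y₂}`, which is a multiple of 8.
-/

namespace Zesting

/-- The Klein four-group. -/
abbrev K := ZMod 2 × ZMod 2

/-- `ζ₈ = e^{iπ/4}`, a primitive eighth root of unity. -/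
noncomputable def z8 : ℂˣ :=
  Units.mk0 (Complex.exp (Real.pi * Complex.I / 4)) (Complex.exp_ne_zero _)

/-- The symmetric bicharacter (and pairing) `(x,y) ↦ (−1)^{x₁y₁ + x₂y₂}`. -/
noncomputable def cK (x y : K) : ℂˣ :=
  (-1 : ℂˣ) ^ (x.1.val * y.1.val + x.2.val * y.2.val)

/-- `λ(x,y) = (m x₁y₁ mod 2, n x₂y₂ mod 2)`. -/
def lam15 (m n : ℤ) : K → K → K := fun x y =>
  (((m * x.1.val * y.1.val : ℤ) : ZMod 2), ((n * x.2.val * y.2.val : ℤ) : ZMod 2))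

/-- `ω(x,y,z) = ζ₈^{2(m x₁y₁z₁ + n x₂y₂z₂)}`. -/
noncomputable def w15 (m n : ℤ) : K → K → K → ℂˣ := fun x y z =>
  z8 ^ (2 * (m * x.1.val * y.1.val * z.1.val + n * x.2.val * y.2.val * z.2.val))

/-- `t(x,y) = ζ₈^{m x₁y₁ + n x₂y₂}·(−1)^{c' x₁y₂}`. -/
noncomputable def t15 (m n c' : ℤ) : K → K → ℂˣ := fun x y =>
  z8 ^ (m * x.1.val * y.1.val + n * x.2.val * y.2.val) *
    (-1 : ℂˣ) ^ (c' * x.1.val * y.2.val)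

lemma z8_pow_eight : z8 ^ 8 = 1 := by
  ext
  rw [Units.val_pow_eq_pow_val, z8, Units.val_mk0, ← Complex.exp_nat_mul, Units.val_one]
  convert Complex.exp_two_pi_mul_I using 2
  push_cast
  ring

lemma z8_pow_four : z8 ^ 4 = -1 := by
  ext
  rw [Units.val_pow_eq_pow_val, z8, Units.val_mk0, ← Complex.exp_nat_mul, Units.val_neg,
    Units.val_one]
  convert Complex.exp_pi_mul_I using 2
  push_cast
  ring

lemma z8_zpow_eq_zpow {a b : ℤ} (h : a ≡ b [ZMOD 8]) : z8 ^ a = z8 ^ b :=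
  zpow_eq_zpow_iff_modEq.2 <|
    h.of_dvd <| Int.natCast_dvd_natCast.2 <| orderOf_dvd_of_pow_eq_one z8_pow_eight

lemma val_add_zmod_two (a b : ZMod 2) :
    ((a + b).val : ℤ) = a.val + b.val - 2 * a.val * b.val := by
  fin_cases a <;> fin_cases b <;> rfl

lemma val_intCast_modEq_two (k : ℤ) : ((k : ZMod 2).val : ℤ) ≡ k [ZMOD 2] := by
  rw [ZMod.val_intCast]
  exact Int.mod_modEq k 2

lemma mul_self_modEq_two (m : ℤ) : m * m ≡ m [ZMOD 2] := by
  obtain ⟨r, hr⟩ := Int.even_mul_pred_self m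
  exact Int.modEq_iff_dvd.2 ⟨-r, by linear_combination -hr⟩

lemma four_mul_modEq_eight {a b : ℤ} (h : a ≡ b [ZMOD 2]) : 4 * a ≡ 4 * b [ZMOD 8] :=
  h.mul_left' (c := 4)

lemma lam15_apply (m n : ℤ) (x y : K) :
    lam15 m n x y = ((m : ZMod 2) * x.1 * y.1, (n : ZMod 2) * x.2 * y.2) := by
  simp [lam15]

lemma lam15_comm (m n : ℤ) (x y : K) : lam15 m n x y = lam15 m n y x := by
  simp only [lam15_apply, Prod.ext_iff]
  constructor <;> ring

lemma lam15_cocycle (m n : ℤ) (x y z : K) :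
    lam15 m n y z - lam15 m n (x + y) z + lam15 m n x (y + z) - lam15 m n x y = 0 := by
  simp only [lam15_apply, Prod.ext_iff, Prod.fst_add, Prod.snd_add, Prod.fst_sub, Prod.snd_sub,
    Prod.fst_zero, Prod.snd_zero]
  constructor <;> ring

lemma cK_eq (u v : K) :
    cK u v = z8 ^ (4 * (u.1.val * v.1.val + u.2.val * v.2.val : ℤ)) := by
  rw [cK, ← z8_pow_four, ← pow_mul, ← zpow_natCast]
  push_cast
  rfl

lemma t15_eq (m n c' : ℤ) (x y : K) :
    t15 m n c' x y =
      z8 ^ (m * x.1.val * y.1.val + n * x.2.val * y.2.val + 4 * (c' * x.1.val * y.2.val)) := by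
  rw [t15, ← z8_pow_four, ← zpow_natCast, ← zpow_mul, ← zpow_add, Nat.cast_ofNat]

lemma cK_lam15_right (m n : ℤ) (x y z : K) :
    cK z (lam15 m n x y) =
      z8 ^ (4 * (m * x.1.val * y.1.val * z.1.val + n * x.2.val * y.2.val * z.2.val)) := by
  rw [cK_eq]
  refine z8_zpow_eq_zpow (four_mul_modEq_eight ?_)
  calc _ ≡ z.1.val * (m * x.1.val * y.1.val) + z.2.val * (n * x.2.val * y.2.val) [ZMOD 2] := by
        gcongr <;> exact val_intCast_modEq_two _
    _ = _ := by ring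

lemma cK_lam15_lam15 (m n : ℤ) (x y z w : K) :
    cK (lam15 m n x y) (lam15 m n z w) =
      z8 ^ (4 * (m * x.1.val * y.1.val * z.1.val * w.1.val +
        n * x.2.val * y.2.val * z.2.val * w.2.val)) := by
  rw [cK_eq]
  refine z8_zpow_eq_zpow (four_mul_modEq_eight ?_)
  calc _ ≡ (m * x.1.val * y.1.val) * (m * z.1.val * w.1.val) +
        (n * x.2.val * y.2.val) * (n * z.2.val * w.2.val) [ZMOD 2] := by
        gcongr <;> exact val_intCast_modEq_two _
    _ = (m * m) * (x.1.val * y.1.val * z.1.val * w.1.val) +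
        (n * n) * (x.2.val * y.2.val * z.2.val * w.2.val) := by ring
    _ ≡ m * (x.1.val * y.1.val * z.1.val * w.1.val) +
        n * (x.2.val * y.2.val * z.2.val * w.2.val) [ZMOD 2] := by
        gcongr <;> exact mul_self_modEq_two _
    _ = _ := by ring

lemma w15_differential_eq_cK_lam15 (m n : ℤ) (x y z w : K) :
    w15 m n y z w * (w15 m n (x + y) z w)⁻¹ * w15 m n x (y + z) w *
        (w15 m n x y (z + w))⁻¹ * w15 m n x y z =
      cK (lam15 m n x y) (lam15 m n z w) := by
  simp only [cK_lam15_lam15, w15, ← zpow_neg, ← zpow_add, Prod.fst_add, Prod.snd_add,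
    val_add_zmod_two]
  congr 1
  ring

lemma bz2_w15_t15 (m n c' : ℤ) (x y z : K) :
    w15 m n x y z * w15 m n y z x / w15 m n y x z =
      t15 m n c' x y * t15 m n c' x z / t15 m n c' x (y + z) := by
  simp only [w15, t15_eq, div_eq_mul_inv, ← zpow_neg, ← zpow_add, Prod.fst_add, Prod.snd_add,
    val_add_zmod_two]
  exact z8_zpow_eq_zpow <| Int.modEq_iff_dvd.2 ⟨c' * x.1.val * y.2.val * z.2.val, by ring⟩

lemma bz3_w15_t15 (m n c' : ℤ) (x y z : K) :
    cK z (lam15 m n x y) =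
      (w15 m n x y z * w15 m n z x y / w15 m n x z y) *
        (t15 m n c' x z * t15 m n c' y z / t15 m n c' (x + y) z) := by
  simp only [cK_lam15_right, w15, t15_eq, div_eq_mul_inv, ← zpow_neg, ← zpow_add, Prod.fst_add,
    Prod.snd_add, val_add_zmod_two]
  exact z8_zpow_eq_zpow <| Int.modEq_iff_dvd.2 ⟨c' * x.1.val * y.1.val * z.2.val, by ring⟩

theorem statement15_general (m n c' : ℤ) :
    (∀ x y, lam15 m n x y = lam15 m n y x) ∧
    (∀ x y z,
      lam15 m n y z - lam15 m n (x + y) z + lam15 m n x (y + z) - lam15 m n x y = 0) ∧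
    (∀ x y z w,
      w15 m n y z w * (w15 m n (x + y) z w)⁻¹ * w15 m n x (y + z) w *
          (w15 m n x y (z + w))⁻¹ * w15 m n x y z =
        cK (lam15 m n x y) (lam15 m n z w)) ∧
    (∀ x y z,
      w15 m n x y z * w15 m n y z x / w15 m n y x z =
        t15 m n c' x y * t15 m n c' x z / t15 m n c' x (y + z)) ∧
    (∀ x y z,
      cK z (lam15 m n x y) =
        (w15 m n x y z * w15 m n z x y / w15 m n x z y) *
          (t15 m n c' x z * t15 m n c' y z / t15 m n c' (x + y) z)) :=
  ⟨lam15_comm m n, lam15_cocycle m n, w15_differential_eq_cK_lam15 m n, bz2_w15_t15 m n c',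
    bz3_w15_t15 m n c'⟩

/-- `(λ, ω, t)` is a braided zesting datum: `λ` is a
symmetric 2-cocycle, `d³(ω) = λ ∧_c λ`, and (BZ2) and (BZ3) hold. -/
theorem statement15 (m n c' : ℤ) (hc' : c' = 0 ∨ c' = 1) :
    (∀ x y, lam15 m n x y = lam15 m n y x) ∧
    (∀ x y z,
      lam15 m n y z - lam15 m n (x + y) z + lam15 m n x (y + z) - lam15 m n x y = 0) ∧
    (∀ x y z w,
      w15 m n y z w * (w15 m n (x + y) z w)⁻¹ * w15 m n x (y + z) w *
          (w15 m n x y (z + w))⁻¹ * w15 m n x y z =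
        cK (lam15 m n x y) (lam15 m n z w)) ∧
    (∀ x y z,
      w15 m n x y z * w15 m n y z x / w15 m n y x z =
        t15 m n c' x y * t15 m n c' x z / t15 m n c' x (y + z)) ∧
    (∀ x y z,
      cK z (lam15 m n x y) =
        (w15 m n x y z * w15 m n z x y / w15 m n x z y) *
          (t15 m n c' x z * t15 m n c' y z / t15 m n c' (x + y) z)) :=
  statement15_general m n c'

end Zesting
end

section
/- Let K = ℤ/2 × ℤ/2, identify K̂ with K via the pairing ⟨x,y⟩ = (−1)^{x₁y₁ + x₂y₂}, and use the symmetric bicharacter c(x,y) = (−1)^{x₁y₁ + x₂y₂}. For m⃗ = (m₁,m₂), n⃗ = (n₁,n₂) ∈ ℤ/2 × ℤ/2, let λ_{m⃗,n⃗}(x,y) = (m₁x₁y₁ + n₁x₂y₂, m₂x₁y₁ + n₂x₂y₂) ∈ K. Then there exist ω ∈ C³(K, ℂˣ) and t ∈ C²(K, ℂˣ) such that (λ_{m⃗,n⃗}, ω, t) is a braided zesting datum (i.e. d³(ω) = λ_{m⃗,n⃗} ∧_c λ_{m⃗,n⃗} and equations (BZ2) and (BZ3) hold) if and only if m₂ =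 0 and n₁ = 0. -/
/-!
Necessity: let `2g = 0`. Evaluating (BZ2), (BZ3) and `d³ω = λ ∧_c λ` at a
few triples built from `0` and `g` shows that `c(λ(g,g), λ(g,g))` and `⟨g, λ(g,g)⟩` both equal
`t(g,g)⁴`. Since `λ(e₁,e₁) = m⃗` and `λ(e₂,e₂) = n⃗`, this says `(−1)^{m₁+m₂} = (−1)^{m₁}` and
`(−1)^{n₁+n₂} = (−1)^{n₂}`.

Sufficiency: when `m₂ = n₁ = 0`, the cocycle `λ`, the bicharacter `c` and the pairing all split as
products over the two factors `ℤ/2` of `K`, with `λ` given by `(x, y) ↦ p x y` on a factor. On `ℤ/2`,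
`ω(x,y,z) = i^{pxyz}` and `t(x,y) = ζ₈^{pxy}` give a braided zesting datum, and braided zesting
data on two groups multiply to one on their product.
-/

namespace Zesting

def lamMN (m n : K) : K → K → K := fun x y =>
  (m.1 * x.1 * y.1 + n.1 * x.2 * y.2, m.2 * x.1 * y.1 + n.2 * x.2 * y.2)

/-- `B` stands for the dual group `Â`, with `pair` the evaluation pairing `⟨·,·⟩`;
`d_omega` is `d³ω = λ ∧_c λ`. -/
structure IsBraidedZestingDatum {A B G : Type*} [AddCommGroup A] [AddCommGroup B] [CommGroup G]
    (c : B → B → G) (pair : A → B → G) (lam : A → A → B)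
    (ω : A → A → A → G) (t : A → A → G) : Prop where
  lam_symm : ∀ x y, lam x y = lam y x
  lam_cocycle : ∀ x y z, lam y z - lam (x + y) z + lam x (y + z) - lam x y = 0
  d_omega : ∀ x y z v,
    ω y z v * (ω (x + y) z v)⁻¹ * ω x (y + z) v * (ω x y (z + v))⁻¹ * ω x y z =
      c (lam x y) (lam z v)
  bz2 : ∀ x y z, ω x y z * ω y z x / ω y x z = t x y * t x z / t x (y + z)
  bz3 : ∀ x y z,
    pair z (lam x y) = (ω x y z * ω z x y / ω x z y) * (t x z * t y z / t (x + y) z)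

namespace IsBraidedZestingDatum

section Obstruction

variable {A B G : Type*} [AddCommGroup A] [AddCommGroup B] [CommGroup G]
  {c : B → B → G} {pair : A → B → G} {lam : A → A → B} {ω : A → A → A → G} {t : A → A → G}

theorem bichar_lam_self_eq_pair (h : IsBraidedZestingDatum c pair lam ω t)
    (hc : c 0 0 = 1) (hpair_left : ∀ b, pair 0 b = 1) (hpair_right : ∀ a, pair a 0 = 1)
    (hlam : ∀ y, lam 0 y = 0) {g : A} (hg : g + g = 0) :
    c (lam g g) (lam g g) = pair g (lam g g) := by
  have ω₀ : ω 0 0 0 = 1 := by simpa [hlam, hc] using h.d_omega 0 0 0 0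
  have t₀ : t 0 0 = 1 := by simpa [hlam, hpair_left, ω₀, eq_comm] using h.bz3 0 0 0
  have bz2_g0g := congrArg Additive.ofMul (h.bz2 g 0 g)
  have bz3_0gg := congrArg Additive.ofMul (h.bz3 0 g g)
  have bz3_gg0 := congrArg Additive.ofMul (h.bz3 g g 0)
  have bz2_ggg := congrArg Additive.ofMul (h.bz2 g g g)
  have bz3_ggg := congrArg Additive.ofMul (h.bz3 g g g)
  have d_gggg := congrArg Additive.ofMul (h.d_omega g g g g)
  simp only [zero_add, hg, hlam, hpair_left, hpair_right, t₀, ofMul_mul, ofMul_div,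
    ofMul_inv, ofMul_one] at bz2_g0g bz3_0gg bz3_gg0 bz2_ggg bz3_ggg d_gggg
  apply Additive.ofMul.injective
  linear_combination (norm := abel) bz2_ggg + bz3_gg0 - bz3_0gg - bz2_g0g - bz3_ggg - d_gggg

end Obstruction

section Product

variable {A₁ A₂ B₁ B₂ G : Type*} [AddCommGroup A₁] [AddCommGroup A₂] [AddCommGroup B₁]
  [AddCommGroup B₂] [CommGroup G]
  {c₁ : B₁ → B₁ → G} {pair₁ : A₁ → B₁ → G} {lam₁ : A₁ → A₁ → B₁} {ω₁ : A₁ → A₁ → A₁ → G}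
  {t₁ : A₁ → A₁ → G} {c₂ : B₂ → B₂ → G} {pair₂ : A₂ → B₂ → G} {lam₂ : A₂ → A₂ → B₂}
  {ω₂ : A₂ → A₂ → A₂ → G} {t₂ : A₂ → A₂ → G}

theorem prod (h₁ : IsBraidedZestingDatum c₁ pair₁ lam₁ ω₁ t₁)
    (h₂ : IsBraidedZestingDatum c₂ pair₂ lam₂ ω₂ t₂) :
    IsBraidedZestingDatum (fun (a b : B₁ × B₂) => c₁ a.1 b.1 * c₂ a.2 b.2)
      (fun (x : A₁ × A₂) (b : B₁ × B₂) => pair₁ x.1 b.1 * pair₂ x.2 b.2)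
      (fun (x y : A₁ × A₂) => (lam₁ x.1 y.1, lam₂ x.2 y.2))
      (fun (x y z : A₁ × A₂) => ω₁ x.1 y.1 z.1 * ω₂ x.2 y.2 z.2)
      (fun (x y : A₁ × A₂) => t₁ x.1 y.1 * t₂ x.2 y.2) where
  lam_symm x y := Prod.ext (h₁.lam_symm x.1 y.1) (h₂.lam_symm x.2 y.2)
  lam_cocycle x y z := Prod.ext (h₁.lam_cocycle x.1 y.1 z.1) (h₂.lam_cocycle x.2 y.2 z.2)
  d_omega x y z v := by
    simp only [← h₁.d_omega, ← h₂.d_omega, mul_inv]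
    ac_rfl
  bz2 x y z := by
    rw [mul_mul_mul_comm, mul_div_mul_comm, h₁.bz2, h₂.bz2, mul_mul_mul_comm, mul_div_mul_comm]
    rfl
  bz3 x y z := by
    simp only [h₁.bz3, h₂.bz3, div_eq_mul_inv, mul_inv]
    ac_rfl

end Product

end IsBraidedZestingDatum

noncomputable def zeta8 : AddChar (ZMod 8) ℂˣ := Circle.toUnits.compAddChar ZMod.toCircle

theorem zeta8_four : zeta8 4 = -1 := by
  ext
  have h : (2 * Real.pi * Complex.I * 4 / 8 : ℂ) = Real.pi * Complex.I := by ring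
  simp only [zeta8, MonoidHom.compAddChar_apply, Function.comp_apply, Circle.toUnits_apply,
    Units.val_mk0, Units.val_neg, Units.val_one]
  simpa [h, Complex.exp_pi_mul_I] using ZMod.toCircle_natCast (N := 8) 4

noncomputable def cZ2 (a b : ZMod 2) : ℂˣ := (-1 : ℂˣ) ^ (a.val * b.val)

theorem cZ2_eq_zeta8 (a b : ZMod 2) : cZ2 a b = zeta8 (4 * (a.val * b.val : ℕ)) := by
  rw [cZ2, ← zeta8_four, ← AddChar.map_nsmul_eq_pow, nsmul_eq_mul, mul_comm]

noncomputable def omegaZ2 (p x y z : ZMod 2) : ℂˣ := zeta8 (2 * (p * x * y * z).val)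

noncomputable def tZ2 (p x y : ZMod 2) : ℂˣ := zeta8 (p * x * y).val

theorem isBraidedZestingDatum_zmod_two (p : ZMod 2) :
    IsBraidedZestingDatum cZ2 cZ2 (fun x y => p * x * y) (omegaZ2 p) (tZ2 p) where
  lam_symm x y := by ring
  lam_cocycle x y z := by ring
  d_omega x y z v := by
    simp only [cZ2_eq_zeta8, omegaZ2, ← AddChar.map_neg_eq_inv, ← AddChar.map_add_eq_mul]
    congr 1
    revert p x y z v
    decide
  bz2 x y z := by
    simp only [omegaZ2, tZ2, ← AddChar.map_sub_eq_div, ← AddChar.map_add_eq_mul]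
    congr 1
    revert p x y z
    decide
  bz3 x y z := by
    simp only [cZ2_eq_zeta8, omegaZ2, tZ2, ← AddChar.map_sub_eq_div, ← AddChar.map_add_eq_mul]
    congr 1
    revert p x y z
    decide

theorem cK_eq_cZ2_mul (x y : K) : cK x y = cZ2 x.1 y.1 * cZ2 x.2 y.2 := pow_add _ _ _

theorem lamMN_eq_prod {m n : K} (hm : m.2 = 0) (hn : n.1 = 0) :
    lamMN m n = fun x y => (m.1 * x.1 * y.1, n.2 * x.2 * y.2) := by
  funext x y
  simp [lamMN, hm, hn]

theorem exists_isBraidedZestingDatum_lamMN {m n : K} (hm : m.2 = 0) (hn : n.1 = 0) :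
    ∃ ω t, IsBraidedZestingDatum cK cK (lamMN m n) ω t := by
  rw [funext₂ cK_eq_cZ2_mul, lamMN_eq_prod hm hn]
  exact ⟨_, _, (isBraidedZestingDatum_zmod_two m.1).prod (isBraidedZestingDatum_zmod_two n.2)⟩

@[simp] theorem cK_zero_left (y : K) : cK 0 y = 1 := by simp [cK]

@[simp] theorem cK_zero_right (x : K) : cK x 0 = 1 := by simp [cK]

@[simp] theorem lamMN_zero_left (m n y : K) : lamMN m n 0 y = 0 := by simp [lamMN]

theorem zmod_two_eq_zero_or_eq_one (a : ZMod 2) : a = 0 ∨ a = 1 := by decide +revert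

theorem snd_eq_zero_of_cK_self_eq (u : K) (h : cK u u = cK (1, 0) u) : u.2 = 0 := by
  obtain ⟨a, b⟩ := u
  rcases zmod_two_eq_zero_or_eq_one a with rfl | rfl <;>
    rcases zmod_two_eq_zero_or_eq_one b with rfl | rfl <;>
    simp_all [cK, ZMod.val_one]

theorem fst_eq_zero_of_cK_self_eq (u : K) (h : cK u u = cK (0, 1) u) : u.1 = 0 := by
  obtain ⟨a, b⟩ := u
  rcases zmod_two_eq_zero_or_eq_one a with rfl | rfl <;>
    rcases zmod_two_eq_zero_or_eq_one b with rfl | rfl <;>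
    simp_all [cK, ZMod.val_one]

/-- There exist `ω ∈ C³(K,ℂˣ)` and `t ∈ C²(K,ℂˣ)` making
`(λ_{m⃗,n⃗}, ω, t)` a braided zesting datum if and only if `m₂ = 0 ∧ n₁ = 0`. -/
theorem statement16 (m n : K) :
    (∃ (ω : K → K → K → ℂˣ) (t : K → K → ℂˣ),
      (∀ x y, lamMN m n x y = lamMN m n y x) ∧
      (∀ x y z,
        lamMN m n y z - lamMN m n (x + y) z + lamMN m n x (y + z) - lamMN m n x y = 0) ∧
      (∀ x y z v,
        ω y z v * (ω (x + y) z v)⁻¹ * ω x (y + z) v * (ω x y (z + v))⁻¹ * ω x y z =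
          cK (lamMN m n x y) (lamMN m n z v)) ∧
      (∀ x y z,
        ω x y z * ω y z x / ω y x z = t x y * t x z / t x (y + z)) ∧
      (∀ x y z,
        cK z (lamMN m n x y) =
          (ω x y z * ω z x y / ω x z y) * (t x z * t y z / t (x + y) z))) ↔
      (m.2 = 0 ∧ n.1 = 0) := by
  constructor
  · rintro ⟨ω, t, h_symm, h_cocycle, h_omega, h_bz2, h_bz3⟩
    have h : IsBraidedZestingDatum cK cK (lamMN m n) ω t :=
      ⟨h_symm, h_cocycle, h_omega, h_bz2, h_bz3⟩
    have key (g : K) := h.bichar_lam_self_eq_pair (cK_zero_left 0) cK_zero_left cK_zero_right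
      (lamMN_zero_left m n) (CharTwo.add_self_eq_zero g)
    refine ⟨snd_eq_zero_of_cK_self_eq m ?_, fst_eq_zero_of_cK_self_eq n ?_⟩
    · simpa [lamMN] using key (1, 0)
    · simpa [lamMN] using key (0, 1)
  · rintro ⟨hm, hn⟩
    obtain ⟨ω, t, h⟩ := exists_isBraidedZestingDatum_lamMN hm hn
    exact ⟨ω, t, h.lam_symm, h.lam_cocycle, h.d_omega, h.bz2, h.bz3⟩

end Zesting
end
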